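/- arXiv:1612.05058 — 6 statements merged into one kernel-verified Lean document; each statement's English description precedes it below -/
import Mathlib

section
/- Let A, B ∈ M₂(ℂ) with B = (b_{ij}) and let 0 ≤ ε ≤ 1. Then W_A of the matrix with entries (b₁₁, ε b₁₂; ε b₂₁, b₂₂) is contained in W_A(B). -/
open Matrix

/-- The classical numerical range of an m×m complex matrix. -/
noncomputable def NR {m : ℕ} (A : Matrix (Fin m) (Fin m) ℂ) : Set ℂ :=
  {z | ∃ x : EuclideanSpace ℂ (Fin m), ‖x‖ = 1 ∧ z = star (x : Fin m → ℂ) ⬝ᵥ A.mulVec x}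

/-- The C-numerical range W_C(B) = {tr (C U* B U) : U unitary}. -/
noncomputable def CNR {m : ℕ} (C B : Matrix (Fin m) (Fin m) ℂ) : Set ℂ :=
  {z | ∃ U : Matrix.unitaryGroup (Fin m) ℂ,
    z = (C * star (U : Matrix (Fin m) (Fin m) ℂ) * B * (U : Matrix (Fin m) (Fin m) ℂ)).trace}

/-- A ⊕ 0_{n-2} : the n×n matrix with A in the top-left 2×2 block and zeros elsewhere. -/
def embed (n : ℕ) (A : Matrix (Fin 2) (Fin 2) ℂ) : Matrix (Fin n) (Fin n) ℂ :=
  fun i j => if hi : (i : ℕ) < 2 then if hj : (j : ℕ) < 2 then A ⟨i, hi⟩ ⟨j, hj⟩ else 0 else 0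

/-- The numerical radius. -/
noncomputable def nrad {m : ℕ} (A : Matrix (Fin m) (Fin m) ℂ) : ℝ :=
  sSup ((fun z : ℂ => ‖z‖) '' NR A)

/-- A(ε) = diag(1,ε) A diag(1,ε). -/
noncomputable def Aeps (ε : ℝ) (A : Matrix (Fin 2) (Fin 2) ℂ) : Matrix (Fin 2) (Fin 2) ℂ :=
  Matrix.diagonal ![1, (ε : ℂ)] * A * Matrix.diagonal ![1, (ε : ℂ)]

/-- The unitary orbit U(A) = {V A V* : V unitary}. -/
def orbit (A : Matrix (Fin 2) (Fin 2) ℂ) : Set (Matrix (Fin 2) (Fin 2) ℂ) :=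
  {X | ∃ V : Matrix.unitaryGroup (Fin 2) ℂ,
    X = (V : Matrix (Fin 2) (Fin 2) ℂ) * A * star (V : Matrix (Fin 2) (Fin 2) ℂ)}

/-
A point of `W_A(B_ε)` is `tr (A' B_ε)` with `A'` unitarily similar to `A`, so it suffices to find
`V ∈ U(2)` with `tr (A' V* B V) = tr (A' B_ε)`. Search among `V = [[x, -ȳ], [y, x̄]]` with
`x = p + r i`, `y = q` real and `p² + q² + r² = 1`. Divided by `S = a₁₂ b₂₁ + a₂₁ b₁₂` (the case
`S = 0` is trivial), the defect `tr (A' V* B V) - tr (A' B_ε)` is a complex-valued real quadratic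
form in `(p, q, r)`, equal to `1 - ε ≥ 0` at `V = 1` and to `-(1 + ε) ≤ 0` at `V = diag(i, -i)`
(because `B_1 = B` and `B_{-1} = V* B V` there). The zero locus of its imaginary part is a real
projective conic through these two points, and such a conic is always connected; along a path in
it from one point to the other the real part changes sign, hence vanishes.
-/

section SignChange

variable {f g : ℝ × ℝ × ℝ → ℝ} {a b c d : ℝ}

lemma exists_common_zero_of_path (hf : Continuous f) {γ : ℝ → ℝ × ℝ × ℝ} (hγ : Continuous γ)
    (h₀ : 0 ≤ f (γ 0)) (h₁ : f (γ 1) ≤ 0) (hγg : ∀ t ∈ Set.Icc (0 : ℝ) 1, γ t ≠ 0 ∧ g (γ t) = 0) :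
    ∃ v, v ≠ 0 ∧ f v = 0 ∧ g v = 0 := by
  obtain ⟨t, ht, hft⟩ := intermediate_value_Icc' zero_le_one (hf.comp hγ).continuousOn ⟨h₁, h₀⟩
  exact ⟨γ t, (hγg t ht).1, hft, (hγg t ht).2⟩

lemma exists_common_zero_of_degenerate (hf : Continuous f)
    (hg : ∀ p q r, g (p, q, r) = a * q ^ 2 + b * p * q + c * p * r + d * q * r)
    (hdeg : c * (a * c - b * d) = 0) (h₁ : 0 ≤ f (1, 0, 0)) (h₃ : f (0, 0, 1) ≤ 0) :
    ∃ v, v ≠ 0 ∧ f v = 0 ∧ g v = 0 := by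
  rcases eq_or_ne c 0 with rfl | hc
  · refine exists_common_zero_of_path hf (γ := fun t => (1 - t, 0, t)) (by fun_prop)
      (by simpa using h₁) (by simpa using h₃) fun t _ => ⟨fun h => ?_, by simp [hg]⟩
    simp only [Prod.mk_eq_zero] at h
    linarith [h.1, h.2.2]
  -- as `a c = b d`, `c g = (b q + c r) (d q + c p)`: two planes through `(1, 0, 0)` and
  -- `(0, 0, 1)` respectively, meeting in the line `ℝ w`
  have hD : a * c - b * d = 0 := by simpa [hc] using hdeg
  set w : ℝ × ℝ × ℝ := (-d, c, -b)
  rcases le_total (f w) 0 with hw | hw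
  · refine exists_common_zero_of_path hf (γ := fun t => (1 - t - t * d, t * c, -(t * b)))
      (by fun_prop) (by simpa using h₁) (by simpa using hw) fun t _ => ⟨fun h => ?_, ?_⟩
    · simp only [Prod.mk_eq_zero, mul_eq_zero, hc, or_false] at h
      simp [h.2.1] at h
    · rw [hg]
      linear_combination t ^ 2 * c * hD
  · refine exists_common_zero_of_path hf
      (γ := fun t => (-((1 - t) * d), (1 - t) * c, -((1 - t) * b) + t)) (by fun_prop)
      (by simpa using hw) (by simpa using h₃) fun t _ => ⟨fun h => ?_, ?_⟩
    · simp only [Prod.mk_eq_zero, mul_eq_zero, hc, or_false, sub_eq_zero] at h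
      simp [← h.2.1] at h
    · rw [hg]
      linear_combination (1 - t) ^ 2 * c * hD

lemma exists_common_zero_of_nondegenerate (hf : Continuous f)
    (hf_smul : ∀ (s : ℝ) v, f (s • v) = s ^ 2 * f v)
    (hg : ∀ p q r, g (p, q, r) = a * q ^ 2 + b * p * q + c * p * r + d * q * r)
    (hc : c ≠ 0) (hD : a * c - b * d ≠ 0) (h₁ : 0 ≤ f (1, 0, 0)) (h₃ : f (0, 0, 1) ≤ 0) :
    ∃ v, v ≠ 0 ∧ f v = 0 ∧ g v = 0 := by
  -- `g` is linear in `r`; solving for `r` parametrizes the conic `g = 0` by the line `(p : q)`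
  let φ : ℝ × ℝ → ℝ × ℝ × ℝ := fun u =>
    (u.1 * (c * u.1 + d * u.2), u.2 * (c * u.1 + d * u.2), -(u.2 * (a * u.2 + b * u.1)))
  have hφ : ∀ u : ℝ × ℝ, u ≠ 0 → φ u ≠ 0 := by
    intro u hu h
    simp only [φ, Prod.mk_eq_zero] at h
    have hL : c * u.1 + d * u.2 = 0 :=
      pow_eq_zero_iff two_ne_zero |>.mp (by linear_combination c * h.1 + d * h.2.1)
    have h₂ : u.2 = 0 := by
      have : u.2 ^ 2 * (a * c - b * d) = 0 := by
        linear_combination (-c) * h.2.2 - u.2 * b * hL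
      simpa [hD] using this
    have h₁ : u.1 = 0 := by simpa [h₂, hc] using hL
    exact hu (Prod.ext h₁ h₂)
  have hφ₀ : φ (1, 0) = c • ((1 : ℝ), (0 : ℝ), (0 : ℝ)) := by simp [φ]
  have hφ₁ : φ (d, -c) = (-(c * (a * c - b * d))) • ((0 : ℝ), (0 : ℝ), (1 : ℝ)) := by
    simp only [φ, Prod.smul_mk, smul_eq_mul, Prod.mk.injEq]
    exact ⟨by ring, by ring, by ring⟩
  refine exists_common_zero_of_path hf (γ := fun t => φ (1 - t + t * d, -(t * c))) (by fun_prop)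
    ?_ ?_ fun t _ => ⟨hφ _ fun h => ?_, by rw [hg]; ring⟩
  · rw [show ((1 : ℝ) - 0 + 0 * d, -(0 * c)) = (1, 0) by simp, hφ₀, hf_smul]
    exact mul_nonneg (sq_nonneg _) h₁
  · rw [show ((1 : ℝ) - 1 + 1 * d, -(1 * c)) = (d, -c) by simp, hφ₁, hf_smul]
    exact mul_nonpos_of_nonneg_of_nonpos (sq_nonneg _) h₃
  · simp only [Prod.mk_eq_zero, neg_eq_zero, mul_eq_zero, hc, or_false] at h
    simp [h.2] at h

lemma exists_common_zero_of_sign_change (hf : Continuous f)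
    (hf_smul : ∀ (s : ℝ) v, f (s • v) = s ^ 2 * f v)
    (hg : ∀ p q r, g (p, q, r) = a * q ^ 2 + b * p * q + c * p * r + d * q * r)
    (h₁ : 0 ≤ f (1, 0, 0)) (h₃ : f (0, 0, 1) ≤ 0) :
    ∃ v, v ≠ 0 ∧ f v = 0 ∧ g v = 0 := by
  -- `-c (a c - b d) / 4` is the determinant of the Gram matrix of `g`
  by_cases hdeg : c * (a * c - b * d) = 0
  · exact exists_common_zero_of_degenerate hf hg hdeg h₁ h₃
  · obtain ⟨hc, hD⟩ := mul_ne_zero_iff.mp hdeg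
    exact exists_common_zero_of_nondegenerate hf hf_smul hg hc hD h₁ h₃

end SignChange

open Complex ComplexConjugate ComplexOrder

def ternaryQuadForm (a₁ a₂ a₃ a₁₂ a₁₃ a₂₃ : ℂ) (v : ℝ × ℝ × ℝ) : ℂ :=
  v.1 ^ 2 * a₁ + v.2.1 ^ 2 * a₂ + v.2.2 ^ 2 * a₃
    + v.1 * v.2.1 * a₁₂ + v.1 * v.2.2 * a₁₃ + v.2.1 * v.2.2 * a₂₃

section TernaryQuadForm

variable {a₁ a₂ a₃ a₁₂ a₁₃ a₂₃ : ℂ}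

lemma ternaryQuadForm_smul (s : ℝ) (v : ℝ × ℝ × ℝ) :
    ternaryQuadForm a₁ a₂ a₃ a₁₂ a₁₃ a₂₃ (s • v) =
      s ^ 2 * ternaryQuadForm a₁ a₂ a₃ a₁₂ a₁₃ a₂₃ v := by
  simp only [ternaryQuadForm, Prod.smul_fst, Prod.smul_snd, smul_eq_mul, ofReal_mul]
  ring

lemma ternaryQuadForm_div (c : ℂ) (v : ℝ × ℝ × ℝ) :
    ternaryQuadForm a₁ a₂ a₃ a₁₂ a₁₃ a₂₃ v / c =
      ternaryQuadForm (a₁ / c) (a₂ / c) (a₃ / c) (a₁₂ / c) (a₁₃ / c) (a₂₃ / c) v := by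
  simp only [ternaryQuadForm]
  ring

lemma continuous_ternaryQuadForm : Continuous (ternaryQuadForm a₁ a₂ a₃ a₁₂ a₁₃ a₂₃) := by
  unfold ternaryQuadForm
  fun_prop

lemma exists_ternaryQuadForm_eq_zero (h₁ : 0 ≤ a₁) (h₃ : a₃ ≤ 0) :
    ∃ v : ℝ × ℝ × ℝ, v.1 ^ 2 + v.2.1 ^ 2 + v.2.2 ^ 2 = 1 ∧
      ternaryQuadForm a₁ a₂ a₃ a₁₂ a₁₃ a₂₃ v = 0 := by
  set Q := ternaryQuadForm a₁ a₂ a₃ a₁₂ a₁₃ a₂₃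
  rw [le_def] at h₁ h₃
  obtain ⟨v, hv, hre, him⟩ := exists_common_zero_of_sign_change (f := fun v => (Q v).re)
    (g := fun v => (Q v).im) (a := a₂.im) (b := a₁₂.im) (c := a₁₃.im) (d := a₂₃.im)
    (continuous_re.comp continuous_ternaryQuadForm)
    (fun s v => by simp [Q, ternaryQuadForm_smul, ← ofReal_pow])
    (fun p q r => by simp [Q, ternaryQuadForm, sq, ← h₁.2, h₃.2]; ring)
    (by simpa [Q, ternaryQuadForm] using h₁.1) (by simpa [Q, ternaryQuadForm] using h₃.1)
  have hQv : Q v = 0 := Complex.ext hre him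
  set n := v.1 ^ 2 + v.2.1 ^ 2 + v.2.2 ^ 2
  have hn : 0 < n := by
    obtain ⟨p, q, r⟩ := v
    have : p ≠ 0 ∨ q ≠ 0 ∨ r ≠ 0 := by simpa [or_iff_not_imp_left] using hv
    rcases this with h | h | h <;> positivity
  refine ⟨(√n)⁻¹ • v, ?_, by simp [Q, ternaryQuadForm_smul] at hQv ⊢; simp [hQv]⟩
  simp only [Prod.smul_fst, Prod.smul_snd, smul_eq_mul, mul_pow, ← mul_add, inv_pow,
    Real.sq_sqrt hn.le]
  exact inv_mul_cancel₀ hn.ne'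

end TernaryQuadForm

def cayleyKlein (x y : ℂ) : Matrix (Fin 2) (Fin 2) ℂ :=
  !![x, -conj y; y, conj x]

lemma star_cayleyKlein (x y : ℂ) : star (cayleyKlein x y) = cayleyKlein (conj x) (-y) := by
  ext i j
  fin_cases i <;> fin_cases j <;> simp [cayleyKlein, star_apply]

lemma cayleyKlein_mem_unitaryGroup {x y : ℂ} (h : normSq x + normSq y = 1) :
    cayleyKlein x y ∈ unitaryGroup (Fin 2) ℂ := by
  have h' : x * conj x + y * conj y = 1 := by simp only [mul_conj, ← ofReal_add, h, ofReal_one]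
  rw [mem_unitaryGroup_iff, star_cayleyKlein]
  ext i j
  fin_cases i <;> fin_cases j <;> simp [cayleyKlein, mul_apply, ← h'] <;> ring

def scaleOffDiag (c : ℂ) (B : Matrix (Fin 2) (Fin 2) ℂ) : Matrix (Fin 2) (Fin 2) ℂ :=
  !![B 0 0, c * B 0 1; c * B 1 0, B 1 1]

lemma trace_mul_scaleOffDiag (A B : Matrix (Fin 2) (Fin 2) ℂ) (c : ℂ) :
    (A * scaleOffDiag c B).trace =
      A 0 0 * B 0 0 + A 1 1 * B 1 1 + c * (A 0 1 * B 1 0 + A 1 0 * B 0 1) := by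
  simp only [scaleOffDiag, trace_fin_two, mul_apply, Fin.sum_univ_two, of_apply, cons_val',
    cons_val_zero, cons_val_one, empty_val', cons_val_fin_one]
  ring

section TraceDefect

variable (A B : Matrix (Fin 2) (Fin 2) ℂ) (τ : ℂ)

-- `v = (p, q, r)` stands for the unitary `cayleyKlein (p + r i) q` when `p² + q² + r² = 1`.
def traceDefect (v : ℝ × ℝ × ℝ) : ℂ :=
  (A * star (cayleyKlein (v.1 + v.2.2 * I) v.2.1) * B * cayleyKlein (v.1 + v.2.2 * I) v.2.1).trace
    - τ * (v.1 ^ 2 + v.2.1 ^ 2 + v.2.2 ^ 2)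

lemma traceDefect_eq_ternaryQuadForm (v : ℝ × ℝ × ℝ) :
    traceDefect A B τ v = ternaryQuadForm (traceDefect A B τ (1, 0, 0))
      (traceDefect A B τ (0, 1, 0)) (traceDefect A B τ (0, 0, 1))
      (traceDefect A B τ (1, 1, 0) - traceDefect A B τ (1, 0, 0) - traceDefect A B τ (0, 1, 0))
      (traceDefect A B τ (1, 0, 1) - traceDefect A B τ (1, 0, 0) - traceDefect A B τ (0, 0, 1))
      (traceDefect A B τ (0, 1, 1) - traceDefect A B τ (0, 1, 0) - traceDefect A B τ (0, 0, 1))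
      v := by
  simp only [traceDefect, ternaryQuadForm, star_cayleyKlein]
  simp only [cayleyKlein, trace_fin_two, mul_apply, Fin.sum_univ_two, of_apply, cons_val',
    cons_val_zero, cons_val_one, empty_val', cons_val_fin_one, map_add, map_mul, map_neg,
    conj_ofReal, conj_I]
  push_cast
  ring

lemma traceDefect_one_zero_zero :
    traceDefect A B τ (1, 0, 0) = (A * scaleOffDiag 1 B).trace - τ := by
  have hV : cayleyKlein 1 0 = 1 := by simp [cayleyKlein, one_fin_two]
  have hB : scaleOffDiag 1 B = B := by simp [scaleOffDiag, ← eta_fin_two B]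
  simp [traceDefect, hV, hB]

lemma traceDefect_zero_zero_one :
    traceDefect A B τ (0, 0, 1) = (A * scaleOffDiag (-1) B).trace - τ := by
  have hV : star (cayleyKlein I 0) * B * cayleyKlein I 0 = scaleOffDiag (-1) B := by
    rw [star_cayleyKlein]
    ext i j
    fin_cases i <;> fin_cases j <;>
      simp [cayleyKlein, scaleOffDiag, mul_apply, vecMul, dotProduct] <;> ring_nf <;> simp
  simp [traceDefect, Matrix.mul_assoc, ← hV]

end TraceDefect

lemma exists_traceDefect_eq_zero (A B : Matrix (Fin 2) (Fin 2) ℂ) {ε : ℝ}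
    (h₀ : -1 ≤ ε) (h₁ : ε ≤ 1) :
    ∃ v : ℝ × ℝ × ℝ, v.1 ^ 2 + v.2.1 ^ 2 + v.2.2 ^ 2 = 1 ∧
      traceDefect A B (A * scaleOffDiag ε B).trace v = 0 := by
  set S := A 0 1 * B 1 0 + A 1 0 * B 0 1
  have hD₁ : traceDefect A B (A * scaleOffDiag ε B).trace (1, 0, 0) = (1 - ε) * S := by
    rw [traceDefect_one_zero_zero, trace_mul_scaleOffDiag, trace_mul_scaleOffDiag]
    ring
  have hD₃ : traceDefect A B (A * scaleOffDiag ε B).trace (0, 0, 1) = -(1 + ε) * S := by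
    rw [traceDefect_zero_zero_one, trace_mul_scaleOffDiag, trace_mul_scaleOffDiag]
    ring
  rcases eq_or_ne S 0 with hS | hS
  · exact ⟨(1, 0, 0), by norm_num, by rw [hD₁, hS, mul_zero]⟩
  set T := traceDefect A B (A * scaleOffDiag ε B).trace
  obtain ⟨v, hv, hv₀⟩ := exists_ternaryQuadForm_eq_zero (a₁ := T (1, 0, 0) / S)
    (a₂ := T (0, 1, 0) / S) (a₃ := T (0, 0, 1) / S)
    (a₁₂ := (T (1, 1, 0) - T (1, 0, 0) - T (0, 1, 0)) / S)
    (a₁₃ := (T (1, 0, 1) - T (1, 0, 0) - T (0, 0, 1)) / S)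
    (a₂₃ := (T (0, 1, 1) - T (0, 1, 0) - T (0, 0, 1)) / S)
    (by rw [hD₁, mul_div_cancel_right₀ _ hS]; exact_mod_cast (by linarith : (0 : ℝ) ≤ 1 - ε))
    (by rw [hD₃, mul_div_cancel_right₀ _ hS, neg_nonpos]
        exact_mod_cast (by linarith : (0 : ℝ) ≤ 1 + ε))
  rw [← ternaryQuadForm_div, div_eq_zero_iff, ← traceDefect_eq_ternaryQuadForm] at hv₀
  exact ⟨v, hv, hv₀.resolve_right hS⟩

lemma exists_mem_unitaryGroup_trace_eq (A B : Matrix (Fin 2) (Fin 2) ℂ) {ε : ℝ}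
    (h₀ : -1 ≤ ε) (h₁ : ε ≤ 1) :
    ∃ V ∈ unitaryGroup (Fin 2) ℂ,
      (A * star V * B * V).trace = (A * scaleOffDiag ε B).trace := by
  obtain ⟨v, hv, hv₀⟩ := exists_traceDefect_eq_zero A B h₀ h₁
  refine ⟨_, cayleyKlein_mem_unitaryGroup (x := v.1 + v.2.2 * I) (y := v.2.1) ?_, ?_⟩
  · rw [normSq_add_mul_I, normSq_ofReal, ← hv]
    ring
  · have hv' : (v.1 : ℂ) ^ 2 + v.2.1 ^ 2 + v.2.2 ^ 2 = 1 := by exact_mod_cast hv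
    rwa [traceDefect, hv', mul_one, sub_eq_zero] at hv₀

theorem stmt2 (A B : Matrix (Fin 2) (Fin 2) ℂ) (ε : ℝ) (h0 : 0 ≤ ε) (h1 : ε ≤ 1) :
    CNR A !![B 0 0, (ε : ℂ) * B 0 1; (ε : ℂ) * B 1 0, B 1 1] ⊆ CNR A B := by
  rintro z ⟨⟨U, hU⟩, rfl⟩
  have hcycle : ∀ M, (A * star U * M * U).trace = (U * A * star U * M).trace := fun M => by
    rw [trace_mul_comm]
    simp only [Matrix.mul_assoc]
  obtain ⟨V, hV, hVtr⟩ := exists_mem_unitaryGroup_trace_eq (U * A * star U) B (by linarith) h1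
  refine ⟨⟨V * U, mul_mem hV hU⟩, ?_⟩
  calc (A * star U * scaleOffDiag ε B * U).trace
      _ = (U * A * star U * scaleOffDiag ε B).trace := hcycle _
      _ = (U * A * star U * (star V * B * V)).trace := by rw [← hVtr]; simp only [Matrix.mul_assoc]
      _ = (A * star (V * U) * B * (V * U)).trace := by
        rw [← hcycle, star_mul]
        simp only [Matrix.mul_assoc]
end

section
/- Let A, B ∈ M₂(ℂ). Then W_{A⊕0}(B⊕0) (with 3×3 matrices) equals the union over Â ∈ U(A) and ε ∈ [0,1] of W_B(Â(ε)), where Â(ε) = diag(1,ε) Â diag(1,ε). -/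
/-!
The trace `tr((A ⊕ 0) U* (B ⊕ 0) U)` only sees the top-left `2 × 2` block `X` of `U`: it equals
`tr(A X* B X)`. These blocks are exactly the matrices `W diag(1, ε) V` with `W, V` unitary and
`0 ≤ ε ≤ 1`. Indeed the defect `1 - X* X = c̄ cᵀ`, with `c` the truncated third row of `U`, has rank
at most one, so `X` is isometric on a unit vector `v` with `c ⬝ v = 0` and maps `v⊥` to a multiple
of `(Xv)⊥`; conversely `W diag(1, ε) V` is the top block of `(W ⊕ 1) G (V ⊕ 1)` for a Givens
rotation `G` with cosine `ε`. Cyclicity of the trace turns `tr(A X* B X)` into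
`tr(B W (D (V A V*) D) W*)` with `D = diag(1, ε)`.
-/

open Matrix

open ComplexConjugate

def perp (a : Fin 2 → ℂ) : Fin 2 → ℂ := ![-conj (a 1), conj (a 0)]

def ofCols {α : Type*} (a b : Fin 2 → α) : Matrix (Fin 2) (Fin 2) α := !![a 0, b 0; a 1, b 1]

lemma star_perp_dotProduct_perp (a : Fin 2 → ℂ) : star (perp a) ⬝ᵥ perp a = star a ⬝ᵥ a := by
  simp [perp, dotProduct, Fin.sum_univ_two]
  ring

lemma star_dotProduct_perp (a : Fin 2 → ℂ) : star a ⬝ᵥ perp a = 0 := by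
  simp [perp, dotProduct, Fin.sum_univ_two]
  ring

lemma eq_smul_perp_of_star_dotProduct_eq_zero {a u : Fin 2 → ℂ} (ha : star a ⬝ᵥ a = 1)
    (hu : star a ⬝ᵥ u = 0) :
    u = (a 0 * u 1 - a 1 * u 0) • perp a := by
  simp only [dotProduct, Fin.sum_univ_two, Pi.star_apply, RCLike.star_def] at ha hu
  ext i
  fin_cases i <;> simp [perp]
  · linear_combination (-u 0) * ha + a 0 * hu
  · linear_combination (-u 1) * ha + a 1 * hu

lemma ofCols_perp_mem_unitaryGroup {a : Fin 2 → ℂ} (ha : star a ⬝ᵥ a = 1) :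
    ofCols a (perp a) ∈ unitaryGroup (Fin 2) ℂ := by
  rw [mem_unitaryGroup_iff']
  simp only [dotProduct, Fin.sum_univ_two, Pi.star_apply, RCLike.star_def] at ha
  ext i j
  fin_cases i <;> fin_cases j <;>
    simp [ofCols, perp, mul_apply, Fin.sum_univ_two, one_apply]
  · linear_combination ha
  · ring
  · ring
  · linear_combination ha

lemma mul_ofCols {α : Type*} [Semiring α] (X : Matrix (Fin 2) (Fin 2) α) (a b : Fin 2 → α) :
    X * ofCols a b = ofCols (X *ᵥ a) (X *ᵥ b) := by
  ext i j
  fin_cases i <;> fin_cases j <;> simp [ofCols, mul_apply, mulVec, dotProduct, Fin.sum_univ_two]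

lemma ofCols_smul_right {α : Type*} [CommSemiring α] (a b : Fin 2 → α) (t : α) :
    ofCols a (t • b) = ofCols a b * diagonal ![1, t] := by
  ext i j
  fin_cases i <;> fin_cases j <;> simp [ofCols, mul_comm]

open ComplexOrder in
lemma exists_star_smul_dotProduct_smul_eq_one {n : Type*} [Fintype n] {p : n → ℂ} (hp : p ≠ 0) :
    ∃ r : ℂ, star (r • p) ⬝ᵥ (r • p) = 1 := by
  obtain ⟨s, hs, hps⟩ : ∃ s : ℝ, 0 < s ∧ star p ⬝ᵥ p = s := by
    obtain ⟨hre, him⟩ := Complex.pos_iff.mp (dotProduct_star_self_pos_iff.mpr hp)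
    exact ⟨_, hre, Complex.ext rfl (by simpa using him.symm)⟩
  refine ⟨((√s)⁻¹ : ℝ), ?_⟩
  rw [star_smul, smul_dotProduct, dotProduct_smul, hps]
  simp only [smul_eq_mul, RCLike.star_def, Complex.conj_ofReal]
  norm_cast
  rw [← mul_assoc, ← mul_inv, Real.mul_self_sqrt hs.le, inv_mul_cancel₀ hs.ne']

lemma exists_unit_dotProduct_eq_zero (c : Fin 2 → ℂ) :
    ∃ v : Fin 2 → ℂ, star v ⬝ᵥ v = 1 ∧ c ⬝ᵥ v = 0 := by
  by_cases hc : c = 0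
  · exact ⟨![1, 0], by simp [dotProduct, Fin.sum_univ_two], by simp [hc]⟩
  · have hp : ![-c 1, c 0] ≠ 0 := by
      contrapose! hc
      ext i
      fin_cases i
      · simpa using congrFun hc 1
      · simpa using congrFun hc 0
    obtain ⟨r, hr⟩ := exists_star_smul_dotProduct_smul_eq_one hp
    refine ⟨r • ![-c 1, c 0], hr, ?_⟩
    simp [dotProduct, Fin.sum_univ_two]
    ring

lemma star_mulVec_dotProduct_mulVec_of_defect {n : Type*} [Fintype n] [DecidableEq n]
    {X : Matrix n n ℂ} {c : n → ℂ} (hX : Xᴴ * X = 1 - vecMulVec (star c) c) (a b : n → ℂ) :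
    star (X *ᵥ a) ⬝ᵥ X *ᵥ b = star a ⬝ᵥ b - conj (c ⬝ᵥ a) * (c ⬝ᵥ b) := by
  rw [star_mulVec, ← dotProduct_mulVec, mulVec_mulVec, hX, sub_mulVec, one_mulVec,
    vecMulVec_mulVec, dotProduct_sub]
  simp [dotProduct_smul, star_dotProduct_star, mul_comm]

lemma diagonal_mem_unitaryGroup {n 𝕜 : Type*} [Fintype n] [DecidableEq n] [RCLike 𝕜] {d : n → 𝕜}
    (hd : ∀ i, ‖d i‖ = 1) : diagonal d ∈ unitaryGroup n 𝕜 := by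
  rw [mem_unitaryGroup_iff, star_eq_conjTranspose, diagonal_conjTranspose, diagonal_mul_diagonal,
    ← diagonal_one]
  congr 1
  ext i
  simp [RCLike.mul_conj, hd]

lemma exists_diagonal_eq_diagonal_norm_mul (t : ℂ) :
    ∃ P : unitaryGroup (Fin 2) ℂ, diagonal ![1, t] = diagonal ![1, (‖t‖ : ℂ)] * P := by
  refine ⟨⟨diagonal ![1, Complex.exp (t.arg * Complex.I)], diagonal_mem_unitaryGroup ?_⟩, ?_⟩
  · intro i
    fin_cases i <;> simp [Complex.norm_exp_ofReal_mul_I]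
  · rw [Subtype.coe_mk, diagonal_mul_diagonal]
    congr 1
    ext i
    fin_cases i <;> simp [Complex.norm_mul_exp_arg_mul_I]

lemma exists_eq_unitary_mul_diagonal_mul_unitary {X : Matrix (Fin 2) (Fin 2) ℂ} {c : Fin 2 → ℂ}
    (hX : Xᴴ * X = 1 - vecMulVec (star c) c) :
    ∃ W V : unitaryGroup (Fin 2) ℂ, ∃ ε : ℝ, 0 ≤ ε ∧ ε ≤ 1 ∧
      X = (W : Matrix (Fin 2) (Fin 2) ℂ) * diagonal ![1, (ε : ℂ)] * V := by
  obtain ⟨v, hv, hcv⟩ := exists_unit_dotProduct_eq_zero c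
  set y := X *ᵥ v
  set u := X *ᵥ perp v
  have hy : star y ⬝ᵥ y = 1 := by
    rw [star_mulVec_dotProduct_mulVec_of_defect hX, hv, hcv]; simp
  have hyu : star y ⬝ᵥ u = 0 := by
    rw [star_mulVec_dotProduct_mulVec_of_defect hX, star_dotProduct_perp, hcv]; simp
  have huu : star u ⬝ᵥ u = 1 - conj (c ⬝ᵥ perp v) * (c ⬝ᵥ perp v) := by
    rw [star_mulVec_dotProduct_mulVec_of_defect hX, star_perp_dotProduct_perp, hv]
  set t := y 0 * u 1 - y 1 * u 0
  have hu : u = t • perp y := eq_smul_perp_of_star_dotProduct_eq_zero hy hyu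
  have ht : ‖t‖ ≤ 1 := by
    have h : ‖t‖ ^ 2 = 1 - ‖c ⬝ᵥ perp v‖ ^ 2 := by
      rw [hu, star_smul, smul_dotProduct, dotProduct_smul, star_perp_dotProduct_perp, hy] at huu
      simp only [smul_eq_mul, mul_one, RCLike.star_def, Complex.conj_mul'] at huu
      exact_mod_cast huu
    nlinarith [norm_nonneg t, sq_nonneg ‖c ⬝ᵥ perp v‖]
  obtain ⟨P, hP⟩ := exists_diagonal_eq_diagonal_norm_mul t
  have hV := ofCols_perp_mem_unitaryGroup hv
  refine ⟨⟨ofCols y (perp y), ofCols_perp_mem_unitaryGroup hy⟩,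
    P * star ⟨ofCols v (perp v), hV⟩, ‖t‖, norm_nonneg t, ht, ?_⟩
  calc X = X * ofCols v (perp v) * star (ofCols v (perp v)) := by
        rw [mul_assoc, mem_unitaryGroup_iff.mp hV, mul_one]
    _ = ofCols y (perp y) * diagonal ![1, t] * star (ofCols v (perp v)) := by
        rw [show X * ofCols v (perp v) = ofCols y u from mul_ofCols _ _ _, hu, ofCols_smul_right]
    _ = _ := by
        rw [hP]; simp only [Submonoid.coe_mul, Unitary.coe_star, mul_assoc]

def topBlock {α : Type*} (N : Matrix (Fin 3) (Fin 3) α) : Matrix (Fin 2) (Fin 2) α :=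
  N.submatrix Fin.castSucc Fin.castSucc

lemma topBlock_star {α : Type*} [Star α] (N : Matrix (Fin 3) (Fin 3) α) :
    topBlock (star N) = star (topBlock N) := by
  simp only [topBlock, star_eq_conjTranspose, conjTranspose_submatrix]

lemma trace_embed_mul (A B : Matrix (Fin 2) (Fin 2) ℂ) (N U : Matrix (Fin 3) (Fin 3) ℂ) :
    (embed 3 A * N * embed 3 B * U).trace = (A * topBlock N * B * topBlock U).trace := by
  simp [trace, mul_apply, Fin.sum_univ_three, Fin.sum_univ_two, embed, topBlock]

lemma conjTranspose_topBlock_mul_topBlock {U : Matrix (Fin 3) (Fin 3) ℂ}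
    (hU : U ∈ unitaryGroup (Fin 3) ℂ) :
    (topBlock U)ᴴ * topBlock U = 1 - vecMulVec (star ![U 2 0, U 2 1]) ![U 2 0, U 2 1] := by
  have h := congrFun₂ (mem_unitaryGroup_iff'.mp hU)
  ext i j
  have hij := h i.castSucc j.castSucc
  simp only [mul_apply, Fin.sum_univ_three, star_apply, one_apply, RCLike.star_def] at hij
  fin_cases i <;> fin_cases j <;> simp [topBlock, mul_apply, Fin.sum_univ_two] at hij ⊢ <;>
    linear_combination hij

lemma exists_topBlock_eq (U : unitaryGroup (Fin 3) ℂ) :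
    ∃ W V : unitaryGroup (Fin 2) ℂ, ∃ ε : ℝ, 0 ≤ ε ∧ ε ≤ 1 ∧
      topBlock (U : Matrix (Fin 3) (Fin 3) ℂ) =
        (W : Matrix (Fin 2) (Fin 2) ℂ) * diagonal ![1, (ε : ℂ)] * V :=
  exists_eq_unitary_mul_diagonal_mul_unitary (conjTranspose_topBlock_mul_topBlock U.2)

def extendByOne {α : Type*} [Zero α] [One α] (W : Matrix (Fin 2) (Fin 2) α) :
    Matrix (Fin 3) (Fin 3) α :=
  !![W 0 0, W 0 1, 0; W 1 0, W 1 1, 0; 0, 0, 1]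

lemma extendByOne_mem_unitaryGroup {W : Matrix (Fin 2) (Fin 2) ℂ}
    (hW : W ∈ unitaryGroup (Fin 2) ℂ) :
    extendByOne W ∈ unitaryGroup (Fin 3) ℂ := by
  rw [mem_unitaryGroup_iff', ← Matrix.ext_iff] at hW
  simp [Fin.forall_fin_two, mul_apply, Fin.sum_univ_two, one_apply] at hW
  rw [mem_unitaryGroup_iff']
  ext i j
  fin_cases i <;> fin_cases j <;> simp [extendByOne, mul_apply, Fin.sum_univ_three, hW]

def givensRotation (ε δ : ℝ) : Matrix (Fin 3) (Fin 3) ℂ :=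
  !![1, 0, 0; 0, (ε : ℂ), (δ : ℂ); 0, -(δ : ℂ), (ε : ℂ)]

lemma givensRotation_mem_unitaryGroup {ε δ : ℝ} (h : ε ^ 2 + δ ^ 2 = 1) :
    givensRotation ε δ ∈ unitaryGroup (Fin 3) ℂ := by
  rw [mem_unitaryGroup_iff']
  have hC : (ε : ℂ) ^ 2 + (δ : ℂ) ^ 2 = 1 := by exact_mod_cast h
  ext i j
  fin_cases i <;> fin_cases j <;> simp [givensRotation, mul_apply, Fin.sum_univ_three, mul_comm] <;>
    linear_combination hC

lemma topBlock_extendByOne_mul_givensRotation_mul (W V : Matrix (Fin 2) (Fin 2) ℂ) (ε δ : ℝ) :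
    topBlock (extendByOne W * givensRotation ε δ * extendByOne V) =
      W * diagonal ![1, (ε : ℂ)] * V := by
  ext i j
  fin_cases i <;> fin_cases j <;>
    simp [topBlock, extendByOne, givensRotation, mul_apply, Fin.sum_univ_two]

lemma exists_unitary_topBlock_eq (W V : unitaryGroup (Fin 2) ℂ) {ε : ℝ} (hε0 : 0 ≤ ε)
    (hε1 : ε ≤ 1) :
    ∃ U : unitaryGroup (Fin 3) ℂ,
      topBlock (U : Matrix (Fin 3) (Fin 3) ℂ) =
        (W : Matrix (Fin 2) (Fin 2) ℂ) * diagonal ![1, (ε : ℂ)] * V := by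
  have hδ : ε ^ 2 + √(1 - ε ^ 2) ^ 2 = 1 := by
    rw [Real.sq_sqrt (by nlinarith)]; ring
  exact ⟨⟨_, mul_mem (mul_mem (extendByOne_mem_unitaryGroup W.2)
    (givensRotation_mem_unitaryGroup hδ)) (extendByOne_mem_unitaryGroup V.2)⟩,
    topBlock_extendByOne_mul_givensRotation_mul _ _ _ _⟩

lemma trace_mul_star_mul_mul {n α : Type*} [Fintype n] [CommRing α] [StarRing α]
    (A B W V D : Matrix n n α) (hD : star D = D) :
    (A * star (W * D * V) * B * (W * D * V)).trace =
      (B * W * (D * (V * A * star V) * D) * star W).trace := by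
  rw [show A * star (W * D * V) * B * (W * D * V) =
      (A * (star V * (D * star W))) * (B * (W * (D * V))) by
    simp only [StarMul.star_mul, hD, Matrix.mul_assoc], trace_mul_comm]
  simp only [Matrix.mul_assoc]

theorem stmt4 (A B : Matrix (Fin 2) (Fin 2) ℂ) :
    CNR (embed 3 A) (embed 3 B) =
      {z | ∃ Ahat ∈ orbit A, ∃ ε : ℝ, 0 ≤ ε ∧ ε ≤ 1 ∧ z ∈ CNR B (Aeps ε Ahat)} := by
  have hD (ε : ℝ) : star (diagonal ![1, (ε : ℂ)]) = diagonal ![1, (ε : ℂ)] := by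
    rw [star_eq_conjTranspose, diagonal_conjTranspose]
    congr 1
    ext i
    fin_cases i <;> simp
  ext z
  constructor
  · rintro ⟨U, rfl⟩
    obtain ⟨W, V, ε, hε0, hε1, hU⟩ := exists_topBlock_eq U
    refine ⟨V * A * star (V : Matrix (Fin 2) (Fin 2) ℂ), ⟨V, rfl⟩, ε, hε0, hε1, star W, ?_⟩
    rw [trace_embed_mul, topBlock_star, hU]
    simpa only [Aeps, Unitary.coe_star, star_star] using trace_mul_star_mul_mul A B W V _ (hD ε)
  · rintro ⟨_, ⟨V, rfl⟩, ε, hε0, hε1, W, rfl⟩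
    obtain ⟨U, hU⟩ := exists_unitary_topBlock_eq (star W) V hε0 hε1
    refine ⟨U, ?_⟩
    rw [trace_embed_mul, topBlock_star, hU]
    simpa only [Aeps, Unitary.coe_star, star_star] using
      (trace_mul_star_mul_mul A B (star (W : Matrix (Fin 2) (Fin 2) ℂ)) V _ (hD ε)).symm
end

section
/- Let A, B ∈ M₂(ℂ) and n ≥ 3. If W_{A⊕0_{n-2}}(B⊕0_{n-2}) = W_A(B), then 0 ∈ W_A(B). -/
/-!
Take a point `z = tr (A U* B U)` of `W_A(B)` of least modulus (the range is compact) and put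
`C = U* B U`, `u_k = tr (A E_kk C) + tr (A C E_kk)`. Because `n ≥ 3`, each contraction
`U (1 - t E_kk)` with `0 ≤ t ≤ 2` is the top-left `2 × 2` block of an `n × n` unitary
(`U ⊕ 1` times a Householder reflection), so
`tr (A (1 - t E_kk) C (1 - t E_kk)) = z - t u_k + O(t²)` lies in `W_{A⊕0}(B⊕0) = W_A(B)`.
Minimality of `|z|` at `t = 0` forces `Re (z̄ u_k) ≤ 0`, and `E_00 + E_11 = 1` gives
`u_0 + u_1 = 2z`, whence `|z|² ≤ 0`.
-/

open Matrix

open Set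

lemma Matrix.isCompact_unitaryGroup (n 𝕜 : Type*) [Fintype n] [DecidableEq n] [RCLike 𝕜] :
    IsCompact (unitaryGroup n 𝕜 : Set (Matrix n n 𝕜)) := by
  have hbox : IsCompact (univ.pi fun _ : n => univ.pi fun _ : n => Metric.closedBall (0 : 𝕜) 1 :
      Set (Matrix n n 𝕜)) :=
    isCompact_univ_pi fun _ => isCompact_univ_pi fun _ => isCompact_closedBall 0 1
  refine hbox.of_isClosed_subset (isClosed_unitary (R := Matrix n n 𝕜)) fun U hU => ?_
  simpa using entry_norm_bound_of_unitary hU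

lemma isCompact_CNR {m : ℕ} (C B : Matrix (Fin m) (Fin m) ℂ) : IsCompact (CNR C B) := by
  have hCNR : CNR C B = (fun U => (C * star U * B * U).trace) '' (unitaryGroup (Fin m) ℂ) := by
    ext z
    simp only [CNR, mem_ofPred_eq, mem_image, Subtype.exists, SetLike.mem_coe]
    exact ⟨fun ⟨U, hU, hz⟩ => ⟨U, hU, hz.symm⟩, fun ⟨U, hU, hz⟩ => ⟨U, hU, hz.symm⟩⟩
  have hcont : Continuous fun U : Matrix (Fin m) (Fin m) ℂ => (C * star U * B * U).trace :=
    ((continuous_const.matrix_mul continuous_star).matrix_mul continuous_const).matrix_mul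
      continuous_id |>.matrix_trace
  rw [hCNR]
  exact (isCompact_unitaryGroup (Fin m) ℂ).image hcont

lemma inner_nonneg_of_isMinOn_norm {E : Type*} [NormedAddCommGroup E] [InnerProductSpace ℝ E]
    {f : ℝ → E} {f' : E} {a b : ℝ} (hab : a < b) (hf : HasDerivAt f f' a)
    (hmin : ∀ x ∈ Icc a b, ‖f a‖ ≤ ‖f x‖) : 0 ≤ inner ℝ (f a) f' := by
  have hlocal : IsLocalMinOn (fun x => ‖f x‖ ^ 2) (Icc a b) a :=
    IsMinOn.localize fun x hx => pow_le_pow_left₀ (norm_nonneg _) (hmin x hx) 2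
  have hcone : b - a ∈ posTangentConeAt (Icc a b) a :=
    sub_mem_posTangentConeAt_of_segment_subset (segment_eq_Icc hab.le).subset
  have := hlocal.hasFDerivWithinAt_nonneg hf.norm_sq.hasFDerivAt.hasFDerivWithinAt hcone
  rw [ContinuousLinearMap.toSpanSingleton_apply, smul_eq_mul] at this
  nlinarith

section Compression

variable {ι κ R : Type*} [Fintype ι] [CommRing R] [StarRing R]

lemma Matrix.trace_compress_mul_compress [Fintype κ] (P : Matrix ι κ R) (A B : Matrix κ κ R)
    (U : Matrix ι ι R) :
    (P * A * Pᴴ * star U * (P * B * Pᴴ) * U).trace =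
      (A * star (Pᴴ * U * P) * B * (Pᴴ * U * P)).trace := by
  simp only [star_eq_conjTranspose, conjTranspose_mul, conjTranspose_conjTranspose,
    Matrix.mul_assoc]
  rw [trace_mul_comm]
  simp only [Matrix.mul_assoc]

lemma Matrix.householder_mem_unitaryGroup [DecidableEq ι] {w : ι → R} (hw : star w ⬝ᵥ w = 1) :
    1 - (2 : R) • vecMulVec w (star w) ∈ unitaryGroup ι R := by
  have hsq : vecMulVec w (star w) * vecMulVec w (star w) = vecMulVec w (star w) := by
    rw [vecMulVec_mul_vecMulVec, hw, one_smul]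
  rw [mem_unitaryGroup_iff, star_eq_conjTranspose, conjTranspose_sub, conjTranspose_smul,
    conjTranspose_vecMulVec, star_star, conjTranspose_one, star_ofNat]
  simp only [Matrix.mul_sub, Matrix.sub_mul, Matrix.mul_one, Matrix.one_mul, Matrix.smul_mul,
    Matrix.mul_smul, hsq]
  module

lemma Matrix.compress_householder [DecidableEq ι] [DecidableEq κ] {P : Matrix ι κ R}
    (hP : Pᴴ * P = 1) (w : ι → R) :
    Pᴴ * (1 - (2 : R) • vecMulVec w (star w)) * P =
      1 - (2 : R) • vecMulVec (Pᴴ *ᵥ w) (star (Pᴴ *ᵥ w)) := by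
  rw [Matrix.mul_sub, Matrix.sub_mul, Matrix.mul_one, hP, Matrix.mul_smul, Matrix.smul_mul,
    mul_vecMulVec, vecMulVec_mul, star_mulVec, conjTranspose_conjTranspose]

variable [Fintype κ] [DecidableEq ι] [DecidableEq κ]

lemma Matrix.dilation_mem_unitaryGroup {P : Matrix ι κ R} (hP : Pᴴ * P = 1) {X : Matrix κ κ R}
    (hX : X ∈ unitaryGroup κ R) : P * X * Pᴴ + (1 - P * Pᴴ) ∈ unitaryGroup ι R := by
  have hP' : ∀ M : Matrix κ ι R, Pᴴ * (P * M) = M := fun M => by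
    rw [← Matrix.mul_assoc, hP, Matrix.one_mul]
  have hXX : X * Xᴴ = 1 := mem_unitaryGroup_iff.1 hX
  rw [mem_unitaryGroup_iff, star_eq_conjTranspose]
  simp only [conjTranspose_add, conjTranspose_sub, conjTranspose_mul, conjTranspose_conjTranspose,
    conjTranspose_one, Matrix.mul_add, Matrix.add_mul, Matrix.mul_sub, Matrix.sub_mul,
    Matrix.mul_assoc, Matrix.mul_one, Matrix.one_mul, hP']
  rw [← Matrix.mul_assoc X, hXX, Matrix.one_mul]
  abel

lemma Matrix.compress_dilation_mul {P : Matrix ι κ R} (hP : Pᴴ * P = 1) (X : Matrix κ κ R)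
    (G : Matrix ι ι R) : Pᴴ * ((P * X * Pᴴ + (1 - P * Pᴴ)) * G) * P = X * (Pᴴ * G * P) := by
  have hP' : ∀ M : Matrix κ ι R, Pᴴ * (P * M) = M := fun M => by
    rw [← Matrix.mul_assoc, hP, Matrix.one_mul]
  simp only [Matrix.mul_add, Matrix.add_mul, Matrix.mul_sub, Matrix.sub_mul,
    Matrix.mul_assoc, Matrix.one_mul, hP']
  abel

end Compression

def inclFin2 (n : ℕ) : Matrix (Fin n) (Fin 2) ℂ := of fun i j => if (i : ℕ) = j then 1 else 0

lemma embed_eq_inclFin2_mul (n : ℕ) (A : Matrix (Fin 2) (Fin 2) ℂ) :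
    embed n A = inclFin2 n * A * (inclFin2 n)ᴴ := by
  ext i j
  obtain ⟨i, hi⟩ := i
  obtain ⟨j, hj⟩ := j
  simp only [embed, inclFin2, mul_apply, conjTranspose_apply, of_apply, Fin.sum_univ_two]
  rcases (show i = 0 ∨ i = 1 ∨ 2 ≤ i by omega) with rfl | rfl | hi₂ <;>
    rcases (show j = 0 ∨ j = 1 ∨ 2 ≤ j by omega) with rfl | rfl | hj₂ <;>
    simp <;> split_ifs <;> first | omega | simp

lemma conjTranspose_inclFin2_mul_self {n : ℕ} (hn : 2 ≤ n) : (inclFin2 n)ᴴ * inclFin2 n = 1 := by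
  ext i j
  have hval : ∀ (l : Fin n) (k : Fin 2), (l : ℕ) = k ↔ l = Fin.castLE hn k := by
    simp [Fin.ext_iff]
  simp only [inclFin2, mul_apply, conjTranspose_apply, of_apply, hval]
  simp [one_apply, Fin.castLE_inj, eq_comm]

lemma mem_CNR_embed_of_mem_unitaryGroup {n : ℕ} (A B : Matrix (Fin 2) (Fin 2) ℂ)
    {W : Matrix (Fin n) (Fin n) ℂ} (hW : W ∈ unitaryGroup (Fin n) ℂ) :
    (A * star ((inclFin2 n)ᴴ * W * inclFin2 n) * B * ((inclFin2 n)ᴴ * W * inclFin2 n)).trace ∈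
      CNR (embed n A) (embed n B) :=
  ⟨⟨W, hW⟩, by rw [embed_eq_inclFin2_mul, embed_eq_inclFin2_mul, trace_compress_mul_compress]⟩

lemma exists_mem_unitaryGroup_compress_eq {n : ℕ} (hn : 3 ≤ n) (k : Fin 2) {t : ℝ}
    (ht : t ∈ Icc 0 2) : ∃ G ∈ unitaryGroup (Fin n) ℂ,
      (inclFin2 n)ᴴ * G * inclFin2 n = 1 - (t : ℂ) • single k k 1 := by
  set α : ℝ := √(t / 2)
  set β : ℝ := √(1 - t / 2)
  have hα : α ^ 2 = t / 2 := Real.sq_sqrt (by linarith [ht.1])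
  have hβ : β ^ 2 = 1 - t / 2 := Real.sq_sqrt (by linarith [ht.2])
  -- The reflection in `w = α e_k + β e₂` compresses to `1 - 2α² E_kk`; the third coordinate,
  -- available since `n ≥ 3`, is what makes `w` a unit vector.
  set w : Fin n → ℂ :=
    Pi.single (Fin.castLE (by omega) k) (α : ℂ) + Pi.single ⟨2, by omega⟩ (β : ℂ)
  have hw : star w ⬝ᵥ w = 1 := by
    have hne : Fin.castLE (by omega) k ≠ (⟨2, by omega⟩ : Fin n) := by
      simp [Fin.ext_iff]; omega
    have hsq : α * α + β * β = 1 := by nlinarith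
    simp [w, dotProduct_add, hne, hne.symm]
    exact_mod_cast hsq
  have hPw : (inclFin2 n)ᴴ *ᵥ w = Pi.single k (α : ℂ) := by
    ext j
    fin_cases j <;> fin_cases k <;> simp [w, mulVec_add, mulVec_single, inclFin2]
  refine ⟨_, householder_mem_unitaryGroup hw, ?_⟩
  rw [compress_householder (conjTranspose_inclFin2_mul_self (by omega)), hPw]
  ext i j
  have hαt : (2 * (α * α) : ℂ) = t := by exact_mod_cast (by nlinarith)
  fin_cases i <;> fin_cases j <;> fin_cases k <;> simp [vecMulVec_apply, hαt]

lemma trace_mem_CNR_embed {n : ℕ} (hn : 3 ≤ n) (A B : Matrix (Fin 2) (Fin 2) ℂ)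
    {X : Matrix (Fin 2) (Fin 2) ℂ} (hX : X ∈ unitaryGroup (Fin 2) ℂ) (k : Fin 2) {t : ℝ}
    (ht : t ∈ Icc 0 2) :
    (A * (1 - (t : ℂ) • single k k 1) * (star X * B * X) * (1 - (t : ℂ) • single k k 1)).trace ∈
      CNR (embed n A) (embed n B) := by
  have hP := conjTranspose_inclFin2_mul_self (show 2 ≤ n by omega)
  obtain ⟨G, hG, hGP⟩ := exists_mem_unitaryGroup_compress_eq hn k ht
  have := mem_CNR_embed_of_mem_unitaryGroup A B
    (Submonoid.mul_mem _ (dilation_mem_unitaryGroup hP hX) hG)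
  rw [compress_dilation_mul hP X G, hGP] at this
  have hE : star (1 - (t : ℂ) • single k k (1 : ℂ)) = 1 - (t : ℂ) • single k k 1 := by
    simp [star_eq_conjTranspose, conjTranspose_single]
  rw [star_mul, hE] at this
  simpa only [Matrix.mul_assoc] using this

lemma Matrix.trace_mul_one_sub_smul_mul {m R : Type*} [Fintype m] [DecidableEq m] [CommRing R]
    (A C E : Matrix m m R) (s : R) :
    (A * (1 - s • E) * C * (1 - s • E)).trace =
      (A * C).trace - s * ((A * E * C).trace + (A * C * E).trace) +
        s ^ 2 * (A * E * C * E).trace := by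
  simp only [Matrix.mul_sub, Matrix.sub_mul, Matrix.mul_one, Matrix.mul_smul,
    Matrix.smul_mul, trace_sub, trace_smul, smul_eq_mul, Matrix.mul_assoc]
  ring

lemma inner_nonpos_of_norm_le_quadratic {z u v : ℂ}
    (h : ∀ t ∈ Icc (0 : ℝ) 1, ‖z‖ ≤ ‖z - t * u + t ^ 2 * v‖) : inner ℝ z u ≤ 0 := by
  have hf : HasDerivAt (fun w : ℂ => z - w * u + w ^ 2 * v) (-u) ((0 : ℝ) : ℂ) := by
    simpa using (((hasDerivAt_id (0 : ℂ)).mul_const u).const_sub z).fun_add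
      ((hasDerivAt_pow 2 (0 : ℂ)).mul_const v)
  have := inner_nonneg_of_isMinOn_norm one_pos hf.comp_ofReal (by simpa using h)
  simpa only [Complex.ofReal_zero, zero_mul, sub_zero, ne_eq, OfNat.ofNat_ne_zero,
    not_false_eq_true, zero_pow, add_zero, inner_neg_right, neg_nonneg] using this

theorem stmt5 (A B : Matrix (Fin 2) (Fin 2) ℂ) (n : ℕ) (hn : 3 ≤ n)
    (h : CNR (embed n A) (embed n B) = CNR A B) : (0 : ℂ) ∈ CNR A B := by
  obtain ⟨z, hz, hmin⟩ :=
    (isCompact_CNR A B).exists_isMinOn ⟨_, 1, rfl⟩ continuous_norm.continuousOn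
  obtain ⟨U, hzU⟩ := id hz
  set C := star (U : Matrix (Fin 2) (Fin 2) ℂ) * B * U
  have hzC : z = (A * C).trace := by simp only [hzU, C, Matrix.mul_assoc]
  set u : Fin 2 → ℂ := fun k => (A * single k k 1 * C).trace + (A * C * single k k 1).trace
  have hu (k : Fin 2) : inner ℝ z (u k) ≤ 0 :=
    inner_nonpos_of_norm_le_quadratic (v := (A * single k k 1 * C * single k k 1).trace)
      fun t ht => by
        have hmem := h ▸ trace_mem_CNR_embed hn A B U.2 k ⟨ht.1, by linarith [ht.2]⟩
        refine (show ‖z‖ ≤ _ from hmin hmem).trans_eq ?_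
        rw [trace_mul_one_sub_smul_mul, ← hzC]
  have hsum : u 0 + u 1 = z + z := by
    have hE : single 0 0 1 + single 1 1 1 = (1 : Matrix (Fin 2) (Fin 2) ℂ) := by
      simpa [Fin.sum_univ_two] using sum_single_one (m := Fin 2) (α := ℂ)
    calc u 0 + u 1 = (A * (single 0 0 1 + single 1 1 1) * C).trace +
          (A * C * (single 0 0 1 + single 1 1 1)).trace := by
          simp only [u, Matrix.mul_add, Matrix.add_mul, trace_add]; ring
      _ = z + z := by rw [hE, Matrix.mul_one, Matrix.mul_one, hzC]
  have hz0 : z = 0 := by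
    have := add_nonpos (hu 0) (hu 1)
    rw [← inner_add_right, hsum, inner_add_right, real_inner_self_eq_norm_sq] at this
    simpa using (show ‖z‖ ^ 2 = 0 by linarith [sq_nonneg ‖z‖])
  exact hz0 ▸ hz
end

section
/- Let A, B ∈ M₂(ℂ) and n ≥ 3 with W_{A⊕0_{n-2}}(B⊕0_{n-2}) = W_A(B). Then for every a ∈ W(A), the set a·W(B) = {a b : b ∈ W(B)} is contained in W_A(B); in particular W(A)·W(B) ⊆ W_A(B). -/
open Matrix

/-! When `n ≥ 3`, the rank-one contraction `y x*` built from unit vectors `x, y ∈ ℂ²` is the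
top-left `2 × 2` block of an `n × n` unitary `U`: its first two columns can be taken to be
`(x̄ₚ y, vₚ, 0, …, 0)` with `v = (-x₁, x₀)`, and these extend to an orthonormal basis. Since `A ⊕ 0` and
`B ⊕ 0` only see that block, `tr ((A ⊕ 0) U* (B ⊕ 0) U) = tr (A x y* B y x*) = (x*Ax) (y*By)`,
so `W(A) W(B) ⊆ W_{A ⊕ 0}(B ⊕ 0) = W_A(B)`. -/

open ComplexConjugate

section Unitary

variable {𝕜 : Type*} [RCLike 𝕜] {ι κ : Type*} [Fintype κ] [DecidableEq κ]

theorem exists_mem_unitaryGroup_apply_eq_of_orthonormal (f : ι ↪ κ)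
    {v : ι → EuclideanSpace 𝕜 κ} (hv : Orthonormal 𝕜 v) :
    ∃ U ∈ unitaryGroup κ 𝕜, ∀ i k, U k (f i) = v i k := by
  have hext : Orthonormal 𝕜 ((Set.range f).domRestrict (Function.extend f v 0)) := by
    convert hv.comp _ (Equiv.ofInjective f f.injective).symm.injective
    ext ⟨_, i, rfl⟩ : 1
    simp [Set.domRestrict, f.injective.extend_apply]
  obtain ⟨b, hb⟩ := hext.exists_orthonormalBasis_extension_of_card_eq (by simp)
  refine ⟨(EuclideanSpace.basisFun κ 𝕜).toBasis.toMatrix b,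
    (EuclideanSpace.basisFun κ 𝕜).toMatrix_orthonormalBasis_mem_unitary b, fun i k => ?_⟩
  simp [Module.Basis.toMatrix_apply, hb _ (Set.mem_range_self i), f.injective.extend_apply]

end Unitary

section RankOne

variable {R : Type*} [CommSemiring R] [StarRing R] {ι : Type*} [Fintype ι]

theorem trace_mul_conjTranspose_vecMulVec_mul_vecMulVec (A B : Matrix ι ι R) (x y : ι → R) :
    (A * (vecMulVec y (star x))ᴴ * B * vecMulVec y (star x)).trace
      = (star x ⬝ᵥ A *ᵥ x) * (star y ⬝ᵥ B *ᵥ y) := by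
  rw [conjTranspose_vecMulVec, star_star, mul_vecMulVec, trace_vecMulVec, ← mulVec_mulVec,
    ← mulVec_mulVec, vecMulVec_mulVec, mulVec_smul, smul_dotProduct, op_smul_eq_mul,
    dotProduct_comm (A *ᵥ x)]

end RankOne

section Compression

variable {R : Type*} [Semiring R] {m n : ℕ}

variable (R) in
def finInclusionMatrix (h : m ≤ n) : Matrix (Fin n) (Fin m) R :=
  (1 : Matrix (Fin n) (Fin n) R).submatrix id (Fin.castLE h)

theorem transpose_finInclusionMatrix_mul_mul (h : m ≤ n) (X : Matrix (Fin n) (Fin n) R) :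
    (finInclusionMatrix R h)ᵀ * X * finInclusionMatrix R h
      = X.submatrix (Fin.castLE h) (Fin.castLE h) := by
  ext i j
  simp [finInclusionMatrix, mul_apply, one_apply]

end Compression

theorem embed_eq_finInclusionMatrix_mul {n : ℕ} (h : 2 ≤ n) (A : Matrix (Fin 2) (Fin 2) ℂ) :
    embed n A = finInclusionMatrix ℂ h * A * (finInclusionMatrix ℂ h)ᵀ := by
  ext ⟨k, hk⟩ ⟨l, hl⟩
  simp only [embed, finInclusionMatrix, mul_apply, one_apply, Fin.sum_univ_two, transpose_apply,
    submatrix_apply, id, Fin.ext_iff, Fin.val_castLE]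
  rcases k with _ | _ | k <;> rcases l with _ | _ | l <;> simp

theorem trace_embed_mul_star_mul_embed_mul {n : ℕ} (h : 2 ≤ n) (A B : Matrix (Fin 2) (Fin 2) ℂ)
    (U : Matrix (Fin n) (Fin n) ℂ) :
    (embed n A * star U * embed n B * U).trace
      = (A * (U.submatrix (Fin.castLE h) (Fin.castLE h))ᴴ * B
          * U.submatrix (Fin.castLE h) (Fin.castLE h)).trace := by
  rw [conjTranspose_submatrix, ← transpose_finInclusionMatrix_mul_mul,
    ← transpose_finInclusionMatrix_mul_mul, embed_eq_finInclusionMatrix_mul h,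
    embed_eq_finInclusionMatrix_mul h, star_eq_conjTranspose]
  simp only [Matrix.mul_assoc]
  rw [trace_mul_comm]
  simp only [Matrix.mul_assoc]

theorem EuclideanSpace.conj_mul_add_conj_mul_eq_one {x : EuclideanSpace ℂ (Fin 2)}
    (hx : ‖x‖ = 1) : conj (x 0) * x 0 + conj (x 1) * x 1 = 1 := by
  have hinner := inner_self_eq_norm_sq_to_K (𝕜 := ℂ) x
  rw [hx, PiLp.inner_apply, Fin.sum_univ_two] at hinner
  simpa [Complex.conj_mul'] using hinner

theorem exists_mem_unitaryGroup_submatrix_eq_vecMulVec {n : ℕ} (hn : 2 < n)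
    {x y : EuclideanSpace ℂ (Fin 2)} (hx : ‖x‖ = 1) (hy : ‖y‖ = 1) :
    ∃ U ∈ unitaryGroup (Fin n) ℂ, U.submatrix (Fin.castLE hn.le) (Fin.castLE hn.le)
      = vecMulVec (y : Fin 2 → ℂ) (star (x : Fin 2 → ℂ)) := by
  set e : Fin 3 → EuclideanSpace ℂ (Fin n) := fun k => EuclideanSpace.single (Fin.castLE hn k) 1
  have he : Orthonormal ℂ e := EuclideanSpace.orthonormal_single.comp _ (Fin.castLE_injective hn)
  -- Orthonormality of these columns is that of the columns of the unitary `!![x̄₀, x̄₁; -x₁, x₀]`.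
  set w : Fin 2 → Fin 3 → ℂ := fun p => ![conj (x p) * y 0, conj (x p) * y 1, ![-x 1, x 0] p]
  have hw : Orthonormal ℂ fun p => ∑ k, w p k • e k := by
    rw [orthonormal_iff_ite]
    intro p q
    rw [he.inner_sum]
    have hx1 := EuclideanSpace.conj_mul_add_conj_mul_eq_one hx
    have hy1 := EuclideanSpace.conj_mul_add_conj_mul_eq_one hy
    fin_cases p <;> fin_cases q <;> simp [w, Fin.sum_univ_three]
    · linear_combination conj (x 0) * x 0 * hy1 + hx1
    · linear_combination x 0 * conj (x 1) * hy1
    · linear_combination x 1 * conj (x 0) * hy1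
    · linear_combination conj (x 1) * x 1 * hy1 + hx1
  obtain ⟨U, hU, hcol⟩ := exists_mem_unitaryGroup_apply_eq_of_orthonormal (Fin.castLEEmb hn.le) hw
  refine ⟨U, hU, ?_⟩
  ext k p
  refine (hcol p _).trans ?_
  fin_cases k <;> simp [e, w, Fin.sum_univ_three, Fin.ext_iff, vecMulVec_apply, mul_comm]

theorem stmt7 (A B : Matrix (Fin 2) (Fin 2) ℂ) (n : ℕ) (hn : 3 ≤ n)
    (h : CNR (embed n A) (embed n B) = CNR A B) :
    ∀ a ∈ NR A, ∀ b ∈ NR B, a * b ∈ CNR A B := by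
  rintro _ ⟨x, hx, rfl⟩ _ ⟨y, hy, rfl⟩
  obtain ⟨U, hU, hUxy⟩ := exists_mem_unitaryGroup_submatrix_eq_vecMulVec hn hx hy
  rw [← h]
  refine ⟨⟨U, hU⟩, Eq.symm ?_⟩
  rw [trace_embed_mul_star_mul_embed_mul (Nat.le_of_succ_le hn), hUxy,
    trace_mul_conjTranspose_vecMulVec_mul_vecMulVec]
end

section
/- Let A, B ∈ M₂(ℂ) and α > 0 with α·W(A)·W(B) ⊆ W_A(B). Then α·r(A)·r(B) ≤ 4·r(A)·r(B), where r denotes the numerical radius; in particular, if A, B ≠ 0 then α ≤ 4. -/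
open Matrix

/-! For m × m complex matrices, `‖tr (A C)‖ ≤ 2m · r(A) · r(C)`. Splitting `C = ℜ C + i ℑ C` into
Hermitian parts of numerical radius at most `r(C)` reduces this to Hermitian `H = U diag(λ) U*`,
where `tr (A H) = ∑ λⱼ (U* A U)ⱼⱼ` and both `λⱼ` and `(U* A U)ⱼⱼ` lie in numerical ranges. Since
`U* B U` has the numerical range of `B`, every point of `W_A(B)` has modulus at most
`4 r(A) r(B)` for 2 × 2 matrices, so the hypothesis gives `α |a| |b| ≤ 4 r(A) r(B)` for all
`a ∈ W(A)`, `b ∈ W(B)`; taking suprema proves the bound, and `r(A) > 0` for `A ≠ 0` by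
polarization. -/

open scoped InnerProductSpace ComplexConjugate ComplexStarModule

section NumericalRadius

variable {m : ℕ}

local notation "𝕄" => Matrix (Fin m) (Fin m) ℂ
local notation "T" => Matrix.toEuclideanCLM (𝕜 := ℂ) (n := Fin m)

lemma star_dotProduct_mulVec_eq_inner (A : 𝕄) (x : EuclideanSpace ℂ (Fin m)) :
    star (x : Fin m → ℂ) ⬝ᵥ A *ᵥ x = ⟪x, T A x⟫_ℂ := by
  rw [EuclideanSpace.inner_eq_star_dotProduct, dotProduct_comm]
  rfl

lemma inner_toEuclideanCLM_star (A : 𝕄) (x : EuclideanSpace ℂ (Fin m)) :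
    ⟪x, T (star A) x⟫_ℂ = conj ⟪x, T A x⟫_ℂ := by
  rw [map_star, ContinuousLinearMap.star_eq_adjoint, ContinuousLinearMap.adjoint_inner_right,
    inner_conj_symm]

lemma norm_le_of_mem_NR {A : 𝕄} {z : ℂ} (hz : z ∈ NR A) :
    ‖z‖ ≤ ‖T A‖ := by
  obtain ⟨x, hx, rfl⟩ := hz
  rw [star_dotProduct_mulVec_eq_inner]
  calc ‖⟪x, T A x⟫_ℂ‖ ≤ ‖x‖ * ‖T A x‖ := norm_inner_le_norm _ _
    _ ≤ ‖x‖ * (‖T A‖ * ‖x‖) := by gcongr; exact (T A).le_opNorm x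
    _ = ‖T A‖ := by rw [hx]; ring

lemma norm_le_nrad {A : 𝕄} {z : ℂ} (hz : z ∈ NR A) : ‖z‖ ≤ nrad A :=
  le_csSup ⟨‖T A‖, by rintro _ ⟨w, hw, rfl⟩; exact norm_le_of_mem_NR hw⟩ ⟨z, hz, rfl⟩

lemma norm_inner_le_nrad (A : 𝕄) {x : EuclideanSpace ℂ (Fin m)}
    (hx : ‖x‖ = 1) : ‖⟪x, T A x⟫_ℂ‖ ≤ nrad A :=
  norm_le_nrad ⟨x, hx, (star_dotProduct_mulVec_eq_inner A x).symm⟩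

lemma nrad_nonneg (A : 𝕄) : 0 ≤ nrad A :=
  Real.sSup_nonneg (by rintro _ ⟨z, _, rfl⟩; exact norm_nonneg z)

lemma nrad_le {A : 𝕄} {c : ℝ} (h : ∀ z ∈ NR A, ‖z‖ ≤ c) (hc : 0 ≤ c) :
    nrad A ≤ c :=
  Real.sSup_le (by rintro _ ⟨z, hz, rfl⟩; exact h z hz) hc

lemma mul_nrad_le {A : 𝕄} {c K : ℝ} (hc : 0 ≤ c) (hK : 0 ≤ K)
    (h : ∀ z ∈ NR A, c * ‖z‖ ≤ K) : c * nrad A ≤ K := by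
  rcases hc.eq_or_lt with rfl | hc
  · simpa using hK
  rw [← le_div_iff₀' hc]
  exact nrad_le (fun z hz => (le_div_iff₀' hc).2 (h z hz)) (by positivity)

lemma nrad_le_nrad_of_subset {A B : 𝕄} (h : NR A ⊆ NR B) :
    nrad A ≤ nrad B :=
  nrad_le (fun _ hz => norm_le_nrad (h hz)) (nrad_nonneg B)

lemma nrad_pos {A : 𝕄} (hA : A ≠ 0) : 0 < nrad A := by
  refine (nrad_nonneg A).lt_of_ne' fun h0 => hA ?_
  have hunit : ∀ x : EuclideanSpace ℂ (Fin m), ‖x‖ = 1 → ⟪x, T A x⟫_ℂ = 0 := fun x hx =>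
    norm_eq_zero.1 <| le_antisymm (h0 ▸ norm_inner_le_nrad A hx) (norm_nonneg _)
  have hall : ∀ x, ⟪T A x, x⟫_ℂ = 0 := by
    intro x
    rcases eq_or_ne x 0 with rfl | hx
    · simp
    have := hunit ((‖x‖⁻¹ : ℂ) • x) (norm_smul_inv_norm hx)
    rw [map_smul, inner_smul_left, inner_smul_right] at this
    have hx' : ⟪x, T A x⟫_ℂ = 0 := by simpa [hx] using this
    rw [← inner_conj_symm, hx', map_zero]
  have hT : (T A).toLinearMap = 0 := (inner_map_self_eq_zero _).1 hall
  apply Matrix.toEuclideanCLM.injective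
  rw [map_zero]
  exact ContinuousLinearMap.coe_injective hT

lemma NR_star_mul_mul_subset (A : 𝕄) (U : unitaryGroup (Fin m) ℂ) :
    NR (star (U : 𝕄) * A * (U : 𝕄)) ⊆ NR A := by
  rintro _ ⟨x, hx, rfl⟩
  have hU : T U ∈ unitary _ := Unitary.map_mem _ U.2
  refine ⟨T U x, by rw [ContinuousLinearMap.norm_map_of_mem_unitary hU, hx], ?_⟩
  rw [star_dotProduct_mulVec_eq_inner, star_dotProduct_mulVec_eq_inner, map_mul, map_mul,
    map_star, mul_apply_eq_comp, mul_apply_eq_comp,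
    ContinuousLinearMap.star_eq_adjoint, ContinuousLinearMap.adjoint_inner_right]

lemma diag_mem_NR (A : 𝕄) (j : Fin m) : A j j ∈ NR A :=
  ⟨EuclideanSpace.single j 1, by simp, by simp [dotProduct, mulVec, Pi.single_apply]⟩

lemma norm_trace_mul_conj_diagonal_le (A : 𝕄) (U : unitaryGroup (Fin m) ℂ)
    (d : Fin m → ℂ) :
    ‖(A * ((U : 𝕄) * diagonal d * star (U : 𝕄))).trace‖
      ≤ (∑ j, ‖d j‖) * nrad A := by
  set V : 𝕄 := ↑U
  have htrace : (A * (V * diagonal d * star V)).trace = ∑ j, (star V * A * V) j j * d j := by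
    rw [show A * (V * diagonal d * star V) = (A * V * diagonal d) * star V by noncomm_ring,
      trace_mul_comm, show star V * (A * V * diagonal d) = star V * A * V * diagonal d by
        noncomm_ring]
    simp [trace, mul_diagonal]
  rw [htrace, Finset.sum_mul]
  refine (norm_sum_le _ _).trans (Finset.sum_le_sum fun j _ => ?_)
  rw [norm_mul, mul_comm]
  gcongr
  exact norm_le_nrad (NR_star_mul_mul_subset A U (diag_mem_NR _ j))

lemma norm_trace_mul_le_of_isHermitian (A : 𝕄)
    {H : 𝕄} (hH : H.IsHermitian) :
    ‖(A * H).trace‖ ≤ m * nrad H * nrad A := by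
  have hdiag := hH.conjStarAlgAut_star_eigenvectorUnitary
  rw [Unitary.conjStarAlgAut_star_apply] at hdiag
  have heigen : ∀ j, ‖(RCLike.ofReal ∘ hH.eigenvalues : Fin m → ℂ) j‖ ≤ nrad H := fun j => by
    have := NR_star_mul_mul_subset H hH.eigenvectorUnitary (diag_mem_NR _ j)
    rw [hdiag, diagonal_apply_eq] at this
    exact norm_le_nrad this
  have hspec := hH.spectral_theorem
  rw [Unitary.conjStarAlgAut_apply] at hspec
  calc ‖(A * H).trace‖ ≤ (∑ j, ‖(RCLike.ofReal ∘ hH.eigenvalues : Fin m → ℂ) j‖) * nrad A := by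
        conv_lhs => rw [hspec]
        exact norm_trace_mul_conj_diagonal_le A _ _
    _ ≤ (∑ _j : Fin m, nrad H) * nrad A :=
        mul_le_mul_of_nonneg_right (Finset.sum_le_sum fun j _ => heigen j) (nrad_nonneg A)
    _ = m * nrad H * nrad A := by simp

lemma inner_toEuclideanCLM_realPart (C : 𝕄) (x : EuclideanSpace ℂ (Fin m)) :
    ⟪x, T (ℜ C : 𝕄) x⟫_ℂ = ((⟪x, T C x⟫_ℂ).re : ℂ) := by
  rw [realPart_apply_coe, ← Complex.coe_smul, map_smul, map_add, _root_.smul_apply,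
    _root_.add_apply, inner_smul_right, inner_add_right, inner_toEuclideanCLM_star,
    Complex.add_conj]
  push_cast
  ring

lemma inner_toEuclideanCLM_imaginaryPart (C : 𝕄)
    (x : EuclideanSpace ℂ (Fin m)) :
    ⟪x, T (ℑ C : 𝕄) x⟫_ℂ = ((⟪x, T C x⟫_ℂ).im : ℂ) := by
  rw [imaginaryPart_apply_coe, ← Complex.coe_smul, map_smul, map_smul, map_sub,
    _root_.smul_apply, _root_.smul_apply, _root_.sub_apply, inner_smul_right, inner_smul_right,
    inner_sub_right, inner_toEuclideanCLM_star, Complex.sub_conj]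
  push_cast
  ring_nf
  simp

lemma nrad_realPart_le (C : 𝕄) :
    nrad (ℜ C : 𝕄) ≤ nrad C := by
  refine nrad_le (fun z ⟨x, hx, hz⟩ => ?_) (nrad_nonneg C)
  rw [hz, star_dotProduct_mulVec_eq_inner, inner_toEuclideanCLM_realPart, Complex.norm_real]
  exact (Complex.abs_re_le_norm _).trans (norm_inner_le_nrad C hx)

lemma nrad_imaginaryPart_le (C : 𝕄) :
    nrad (ℑ C : 𝕄) ≤ nrad C := by
  refine nrad_le (fun z ⟨x, hx, hz⟩ => ?_) (nrad_nonneg C)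
  rw [hz, star_dotProduct_mulVec_eq_inner, inner_toEuclideanCLM_imaginaryPart, Complex.norm_real]
  exact (Complex.abs_im_le_norm _).trans (norm_inner_le_nrad C hx)

lemma norm_trace_mul_le (A C : 𝕄) :
    ‖(A * C).trace‖ ≤ 2 * m * nrad C * nrad A := by
  have hre : ‖(A * (ℜ C : 𝕄)).trace‖ ≤ m * nrad C * nrad A :=
    (norm_trace_mul_le_of_isHermitian A (ℜ C).2).trans <| by
      gcongr; exacts [nrad_nonneg A, nrad_realPart_le C]
  have him : ‖(A * (ℑ C : 𝕄)).trace‖ ≤ m * nrad C * nrad A :=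
    (norm_trace_mul_le_of_isHermitian A (ℑ C).2).trans <| by
      gcongr; exacts [nrad_nonneg A, nrad_imaginaryPart_le C]
  conv_lhs => rw [← realPart_add_I_smul_imaginaryPart C]
  rw [mul_add, trace_add, Matrix.mul_smul, trace_smul]
  calc _ ≤ ‖(A * (ℜ C : 𝕄)).trace‖
        + ‖(A * (ℑ C : 𝕄)).trace‖ := by
        refine (norm_add_le _ _).trans_eq ?_
        rw [norm_smul, Complex.norm_I, one_mul]
    _ ≤ m * nrad C * nrad A + m * nrad C * nrad A := add_le_add hre him
    _ = 2 * m * nrad C * nrad A := by ring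

lemma norm_le_of_mem_CNR {A B : 𝕄} {z : ℂ} (hz : z ∈ CNR A B) :
    ‖z‖ ≤ 2 * m * nrad A * nrad B := by
  obtain ⟨U, rfl⟩ := hz
  set V : 𝕄 := ↑U
  rw [show A * star V * B * V = A * (star V * B * V) by simp only [Matrix.mul_assoc]]
  calc _ ≤ 2 * m * nrad (star V * B * V) * nrad A := norm_trace_mul_le _ _
    _ ≤ 2 * m * nrad B * nrad A := by
        gcongr
        exacts [nrad_nonneg A, nrad_le_nrad_of_subset (NR_star_mul_mul_subset B U)]
    _ = 2 * m * nrad A * nrad B := by ring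

end NumericalRadius

theorem stmt8 (A B : Matrix (Fin 2) (Fin 2) ℂ) (α : ℝ) (hα : 0 < α)
    (h : ∀ a ∈ NR A, ∀ b ∈ NR B, (α : ℂ) * a * b ∈ CNR A B) :
    α * nrad A * nrad B ≤ 4 * nrad A * nrad B ∧ (A ≠ 0 → B ≠ 0 → α ≤ 4) := by
  have hK : 0 ≤ 4 * nrad A * nrad B := by
    have := nrad_nonneg A; have := nrad_nonneg B; positivity
  have hbound : α * nrad A * nrad B ≤ 4 * nrad A * nrad B := by
    refine mul_nrad_le (mul_nonneg hα.le (nrad_nonneg A)) hK fun b hb => ?_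
    rw [mul_right_comm]
    refine mul_nrad_le (by positivity) hK fun a ha => ?_
    have := norm_le_of_mem_CNR (h a ha b hb)
    rw [norm_mul, norm_mul, Complex.norm_real, Real.norm_of_nonneg hα.le] at this
    norm_num at this
    linarith
  refine ⟨hbound, fun hA hB => ?_⟩
  have hpos := mul_pos (nrad_pos hA) (nrad_pos hB)
  exact le_of_mul_le_mul_right (by linarith) hpos
end

section
/- Let A = B = [[a, b],[0, a]] ∈ M₂(ℂ) with |a| ≤ ((√3 − 1)/2)·|b|. Then W_A(B) = W_{A⊕0}(B⊕0), and this set is the closed disc centered at 2a² with radius |b|². -/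
/-! For the Jordan block `J = a I + b E₁₂` and a unitary `U`, expanding `tr (J U* J U)` with the
orthonormality of the rows and columns of `U` gives `2a² + b² conj(U₁₂) U₂₁` in dimension 2; the
second term sweeps out the whole disc of radius `|b|²` (take for `U` a Hermitian involution).
In dimension 3 the same expansion gives
`2a² + b² conj(U₁₂) U₂₁ - a² (|U₁₃|² + |U₂₃|²) - ab (conj(U₁₃) U₂₃ + U₃₁ conj(U₃₂))`.
Bounding each term by moduli of entries, and using that two entries of one row or column of `U`
have squared moduli summing to at most 1, the distance to `2a²` is at most `|b|²` as soon as
`|a|² + |a||b| ≤ |b|² / 2`, which is the hypothesis `|a| ≤ (√3 - 1)/2 · |b|`. The inclusion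
`W_J(J) ⊆ W_{J⊕0}(J⊕0)` holds for all matrices, via `U ↦ U ⊕ 1`. -/

open Matrix

namespace Matrix

variable {n 𝕜 : Type*} [Fintype n] [DecidableEq n] [RCLike 𝕜] {U : Matrix n n 𝕜}

lemma sum_norm_sq_row_of_mem_unitaryGroup (hU : U ∈ unitaryGroup n 𝕜) (i : n) :
    ∑ j, ‖U i j‖ ^ 2 = 1 := by
  have h := congrFun (congrFun (mem_unitaryGroup_iff.mp hU) i) i
  simp only [mul_apply, star_apply, one_apply_eq, RCLike.star_def, RCLike.mul_conj] at h
  exact_mod_cast h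

lemma norm_sq_add_norm_sq_row_le_one (hU : U ∈ unitaryGroup n 𝕜) (i : n) {j k : n}
    (hjk : j ≠ k) :
    ‖U i j‖ ^ 2 + ‖U i k‖ ^ 2 ≤ 1 := by
  rw [← sum_norm_sq_row_of_mem_unitaryGroup hU i,
    ← Finset.sum_pair (f := fun j => ‖U i j‖ ^ 2) hjk]
  exact Finset.sum_le_sum_of_subset_of_nonneg (Finset.subset_univ _) fun _ _ _ => sq_nonneg _

lemma norm_sq_add_norm_sq_col_le_one (hU : U ∈ unitaryGroup n 𝕜) (j : n) {i k : n}
    (hik : i ≠ k) :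
    ‖U i j‖ ^ 2 + ‖U k j‖ ^ 2 ≤ 1 :=
  norm_sq_add_norm_sq_row_le_one (transpose_mem_unitaryGroup_iff.mpr hU) j hik

end Matrix

open Matrix

lemma trace_jordan_two (a b : ℂ) {U : Matrix (Fin 2) (Fin 2) ℂ}
    (hU : U ∈ unitaryGroup (Fin 2) ℂ) :
    (!![a, b; 0, a] * star U * !![a, b; 0, a] * U).trace
      = 2 * a ^ 2 + b ^ 2 * (star (U 0 1) * U 1 0) := by
  have hc := mem_unitaryGroup_iff'.mp hU
  have hr := mem_unitaryGroup_iff.mp hU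
  have c00 := congrFun (congrFun hc 0) 0
  have c11 := congrFun (congrFun hc 1) 1
  have c10 := congrFun (congrFun hc 1) 0
  have r10 := congrFun (congrFun hr 1) 0
  simp only [trace_fin_two, mul_apply, Fin.sum_univ_two, star_apply, one_apply_eq, one_apply_ne,
    of_apply, cons_val', cons_val_zero, cons_val_one, cons_val_fin_one, ne_eq, one_ne_zero,
    not_false_eq_true, mul_zero, zero_mul, add_zero, zero_add] at c00 c11 c10 r10 ⊢
  linear_combination a ^ 2 * c00 + a ^ 2 * c11 + a * b * r10 + a * b * c10

lemma embed_three (A : Matrix (Fin 2) (Fin 2) ℂ) :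
    embed 3 A = !![A 0 0, A 0 1, 0; A 1 0, A 1 1, 0; 0, 0, 0] := by
  ext i j
  fin_cases i <;> fin_cases j <;> rfl

lemma trace_embed_jordan_three (a b : ℂ) {U : Matrix (Fin 3) (Fin 3) ℂ}
    (hU : U ∈ unitaryGroup (Fin 3) ℂ) :
    (embed 3 !![a, b; 0, a] * star U * embed 3 !![a, b; 0, a] * U).trace
      = 2 * a ^ 2 + b ^ 2 * (star (U 0 1) * U 1 0)
        - a ^ 2 * (star (U 0 2) * U 0 2 + star (U 1 2) * U 1 2)
        - a * b * (star (U 0 2) * U 1 2 + U 2 0 * star (U 2 1)) := by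
  have hc := mem_unitaryGroup_iff'.mp hU
  have hr := mem_unitaryGroup_iff.mp hU
  have r00 := congrFun (congrFun hr 0) 0
  have r11 := congrFun (congrFun hr 1) 1
  have r10 := congrFun (congrFun hr 1) 0
  have c10 := congrFun (congrFun hc 1) 0
  simp only [embed_three, trace_fin_three, mul_apply, Fin.sum_univ_three, star_apply, one_apply_eq,
    one_apply_ne, of_apply, cons_val', cons_val_zero, cons_val_one, cons_val, cons_val_fin_one,
    ne_eq, one_ne_zero, not_false_eq_true, mul_zero, zero_mul, add_zero, zero_add]
    at r00 r11 r10 c10 ⊢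
  linear_combination a ^ 2 * r00 + a ^ 2 * r11 + a * b * r10 + a * b * c10

lemma mem_unitaryGroup_fin_three_of_mem_fin_two {U : Matrix (Fin 2) (Fin 2) ℂ}
    (hU : U ∈ unitaryGroup (Fin 2) ℂ) :
    !![U 0 0, U 0 1, 0; U 1 0, U 1 1, 0; 0, 0, 1] ∈ unitaryGroup (Fin 3) ℂ := by
  have h := mem_unitaryGroup_iff.mp hU
  have r00 := congrFun (congrFun h 0) 0
  have r01 := congrFun (congrFun h 0) 1
  have r10 := congrFun (congrFun h 1) 0
  have r11 := congrFun (congrFun h 1) 1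
  simp only [mul_apply, Fin.sum_univ_two, star_apply, RCLike.star_def, one_apply_eq, one_apply_ne,
    ne_eq, one_ne_zero, zero_ne_one, not_false_eq_true] at r00 r01 r10 r11
  rw [mem_unitaryGroup_iff]
  ext i j
  fin_cases i <;> fin_cases j <;> simp [mul_apply, Fin.sum_univ_three, *]

lemma CNR_subset_CNR_embed_three (A B : Matrix (Fin 2) (Fin 2) ℂ) :
    CNR A B ⊆ CNR (embed 3 A) (embed 3 B) := by
  rintro _ ⟨U, rfl⟩
  refine ⟨⟨_, mem_unitaryGroup_fin_three_of_mem_fin_two U.2⟩, ?_⟩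
  simp only [embed_three, trace_fin_two, trace_fin_three, mul_apply, Fin.sum_univ_two,
    Fin.sum_univ_three, star_apply, of_apply, cons_val', cons_val_zero, cons_val_one, cons_val,
    cons_val_fin_one, star_zero, mul_zero, zero_mul, add_zero]

lemma exists_norm_le_one_eq_mul {𝕜 : Type*} [NormedDivisionRing 𝕜] {x y : 𝕜} (h : ‖x‖ ≤ ‖y‖) :
    ∃ ζ : 𝕜, ‖ζ‖ ≤ 1 ∧ x = y * ζ := by
  rcases eq_or_ne y 0 with rfl | hy
  · exact ⟨0, by simp, by simpa using h⟩
  · refine ⟨y⁻¹ * x, ?_, by rw [mul_inv_cancel_left₀ hy]⟩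
    rw [norm_mul, norm_inv, inv_mul_le_one₀ (norm_pos_iff.mpr hy)]
    exact h

lemma exists_mem_unitaryGroup_star_apply_mul_apply_eq {ζ : ℂ} (hζ : ‖ζ‖ ≤ 1) :
    ∃ U ∈ unitaryGroup (Fin 2) ℂ, star (U 0 1) * U 1 0 = ζ := by
  obtain ⟨w, rfl⟩ := IsAlgClosed.exists_pow_nat_eq ζ two_pos
  have hw : ‖w‖ ^ 2 ≤ 1 := by rwa [norm_pow] at hζ
  set c : ℝ := √(1 - ‖w‖ ^ 2)
  have hc : (c : ℂ) ^ 2 + starRingEnd ℂ w * w = 1 := by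
    rw [Complex.conj_mul', ← Complex.ofReal_pow, ← Complex.ofReal_pow,
      Real.sq_sqrt (by linarith), ← Complex.ofReal_add, sub_add_cancel, Complex.ofReal_one]
  refine ⟨!![(c : ℂ), star w; w, -c], ?_, by simp [sq]⟩
  rw [mem_unitaryGroup_iff]
  ext i j
  fin_cases i <;> fin_cases j <;> simp [mul_apply, Fin.sum_univ_two] <;>
    first | linear_combination hc | ring

lemma CNR_jordan_two (a b : ℂ) :
    CNR !![a, b; 0, a] !![a, b; 0, a] = Metric.closedBall (2 * a ^ 2) (‖b‖ ^ 2) := by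
  ext z
  rw [Metric.mem_closedBall, Complex.dist_eq]
  constructor
  · rintro ⟨U, rfl⟩
    have hU01 := entry_norm_bound_of_unitary U.2 0 1
    have hU10 := entry_norm_bound_of_unitary U.2 1 0
    rw [trace_jordan_two a b U.2, add_sub_cancel_left, norm_mul, norm_pow, norm_mul, norm_star]
    exact mul_le_of_le_one_right (by positivity)
      (mul_le_one₀ hU01 (norm_nonneg _) hU10)
  · intro hz
    obtain ⟨ζ, hζ, hzζ⟩ := exists_norm_le_one_eq_mul (hz.trans_eq (norm_pow b 2).symm)
    obtain ⟨U, hU, hUζ⟩ := exists_mem_unitaryGroup_star_apply_mul_apply_eq hζ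
    exact ⟨⟨U, hU⟩, by rw [trace_jordan_two a b hU, hUζ, ← hzζ, add_sub_cancel]⟩

lemma sq_add_mul_le_half_sq {x y : ℝ} (hx : 0 ≤ x) (hxy : x ≤ (√3 - 1) / 2 * y) :
    x ^ 2 + x * y ≤ y ^ 2 / 2 := by
  have h3 : √3 ^ 2 = 3 := Real.sq_sqrt (by norm_num)
  have hy : 0 ≤ y := by nlinarith [Real.sqrt_nonneg 3]
  -- `(x + y / 2) ^ 2 ≤ (√3 / 2 * y) ^ 2`
  nlinarith [mul_self_le_mul_self hx hxy, mul_le_mul_of_nonneg_right hxy hy]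

lemma sq_mul_add_mul_mul_add_sq_mul_le_sq {A B p q r s u v : ℝ} (hA : 0 ≤ A) (hB : 0 ≤ B)
    (hAB : A ^ 2 + A * B ≤ B ^ 2 / 2) (hpu : p ^ 2 + u ^ 2 ≤ 1) (hqv : q ^ 2 + v ^ 2 ≤ 1)
    (hrv : r ^ 2 + v ^ 2 ≤ 1) (hsu : s ^ 2 + u ^ 2 ≤ 1) :
    A ^ 2 * (p ^ 2 + q ^ 2) + A * B * (p * q + r * s) + B ^ 2 * (u * v) ≤ B ^ 2 := by
  have hAB₀ : 0 ≤ A * B := mul_nonneg hA hB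
  have hpq : p * q ≤ (p ^ 2 + q ^ 2) / 2 := by nlinarith [sq_nonneg (p - q)]
  have hrs : r * s ≤ (r ^ 2 + s ^ 2) / 2 := by nlinarith [sq_nonneg (r - s)]
  have huv : u * v ≤ (u ^ 2 + v ^ 2) / 2 := by nlinarith [sq_nonneg (u - v)]
  have huv₂ : u ^ 2 + v ^ 2 ≤ 2 := by nlinarith [sq_nonneg p, sq_nonneg q]
  calc A ^ 2 * (p ^ 2 + q ^ 2) + A * B * (p * q + r * s) + B ^ 2 * (u * v)
      ≤ (A ^ 2 + A * B / 2) * (p ^ 2 + q ^ 2) + A * B / 2 * (r ^ 2 + s ^ 2)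
          + B ^ 2 / 2 * (u ^ 2 + v ^ 2) := by
        nlinarith [mul_le_mul_of_nonneg_left (add_le_add hpq hrs) hAB₀,
          mul_le_mul_of_nonneg_left huv (sq_nonneg B)]
    _ ≤ (A ^ 2 + A * B) * (2 - (u ^ 2 + v ^ 2)) + B ^ 2 / 2 * (u ^ 2 + v ^ 2) := by
        nlinarith [mul_le_mul_of_nonneg_left (add_le_add hpu hqv)
            (by positivity : 0 ≤ A ^ 2 + A * B / 2),
          mul_le_mul_of_nonneg_left (add_le_add hrv hsu) (by positivity : 0 ≤ A * B / 2)]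
    _ ≤ B ^ 2 / 2 * (2 - (u ^ 2 + v ^ 2)) + B ^ 2 / 2 * (u ^ 2 + v ^ 2) := by
        gcongr
    _ = B ^ 2 := by ring

lemma norm_trace_embed_jordan_three_sub_le {a b : ℂ} (hab : ‖a‖ ≤ (√3 - 1) / 2 * ‖b‖)
    {U : Matrix (Fin 3) (Fin 3) ℂ} (hU : U ∈ unitaryGroup (Fin 3) ℂ) :
    ‖(embed 3 !![a, b; 0, a] * star U * embed 3 !![a, b; 0, a] * U).trace - 2 * a ^ 2‖
      ≤ ‖b‖ ^ 2 := by
  have hrow (i : Fin 3) {j k : Fin 3} (hjk : j ≠ k) := norm_sq_add_norm_sq_row_le_one hU i hjk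
  have hcol (j : Fin 3) {i k : Fin 3} (hik : i ≠ k) := norm_sq_add_norm_sq_col_le_one hU j hik
  rw [trace_embed_jordan_three a b hU]
  calc _ = ‖b ^ 2 * (star (U 0 1) * U 1 0)
          - a ^ 2 * (star (U 0 2) * U 0 2 + star (U 1 2) * U 1 2)
          - a * b * (star (U 0 2) * U 1 2 + U 2 0 * star (U 2 1))‖ := by congr 1; ring
    _ ≤ ‖b ^ 2 * (star (U 0 1) * U 1 0)‖
          + ‖a ^ 2 * (star (U 0 2) * U 0 2 + star (U 1 2) * U 1 2)‖
          + ‖a * b * (star (U 0 2) * U 1 2 + U 2 0 * star (U 2 1))‖ :=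
        norm_sub_le_of_le (norm_sub_le _ _) le_rfl
    _ ≤ ‖a‖ ^ 2 * (‖U 0 2‖ ^ 2 + ‖U 1 2‖ ^ 2)
          + ‖a‖ * ‖b‖ * (‖U 0 2‖ * ‖U 1 2‖ + ‖U 2 0‖ * ‖U 2 1‖)
          + ‖b‖ ^ 2 * (‖U 0 1‖ * ‖U 1 0‖) := by
        simp only [norm_mul, norm_pow, norm_star]
        have h₁ := norm_add_le (star (U 0 2) * U 0 2) (star (U 1 2) * U 1 2)
        have h₂ := norm_add_le (star (U 0 2) * U 1 2) (U 2 0 * star (U 2 1))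
        simp only [norm_mul, norm_star] at h₁ h₂
        nlinarith [mul_le_mul_of_nonneg_left h₁ (sq_nonneg ‖a‖),
          mul_le_mul_of_nonneg_left h₂ (mul_nonneg (norm_nonneg a) (norm_nonneg b))]
    _ ≤ ‖b‖ ^ 2 :=
        sq_mul_add_mul_mul_add_sq_mul_le_sq (norm_nonneg a) (norm_nonneg b)
          (sq_add_mul_le_half_sq (norm_nonneg a) hab) (hrow 0 (by decide)) (hrow 1 (by decide))
          (hcol 0 (by decide)) (hcol 1 (by decide))

lemma CNR_embed_jordan_three_subset {a b : ℂ} (hab : ‖a‖ ≤ (√3 - 1) / 2 * ‖b‖) :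
    CNR (embed 3 !![a, b; 0, a]) (embed 3 !![a, b; 0, a])
      ⊆ Metric.closedBall (2 * a ^ 2) (‖b‖ ^ 2) := by
  rintro _ ⟨U, rfl⟩
  rw [Metric.mem_closedBall, Complex.dist_eq]
  exact norm_trace_embed_jordan_three_sub_le hab U.2

theorem stmt18 (a b : ℂ)
    (hab : ‖a‖ ≤ ((Real.sqrt 3 - 1) / 2) * ‖b‖) :
    CNR !![a, b; 0, a] !![a, b; 0, a] = CNR (embed 3 !![a, b; 0, a]) (embed 3 !![a, b; 0, a]) ∧
    CNR !![a, b; 0, a] !![a, b; 0, a] = Metric.closedBall (2 * a ^ 2) (‖b‖ ^ 2) := by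
  have h2 := CNR_jordan_two a b
  refine ⟨(CNR_subset_CNR_embed_three _ _).antisymm ?_, h2⟩
  rw [h2]
  exact CNR_embed_jordan_three_subset hab
end
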